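/- In the ∂₀λ-calculus, a closed term M that reduces to a sum containing the identity (M →* I + 𝕄) can be made to reduce exactly to I by applying finitely many closed bags: there exist bags P⃗ with M P₁ ⋯ P_n →* I. -/

import Mathlib

/-- Terms of the (promotion- and test-free) `∂₀λ`-calculus. -/
inductive Tm : Type
  | var : ℕ → Tm
  | lam : ℕ → Tm → Tm
  | app : Tm → List Tm → Tm

mutual
def fv : Tm → Set ℕ
  | .var y => {y}
  | .lam y M => fv M \ {y}
  | .app M P => fv M ∪ fvList P
def fvList : List Tm → Set ℕ
  | [] => ∅
  | L :: P => fv L ∪ fvList P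
end

mutual
def lsub (x : ℕ) (N : Tm) : Tm → Set Tm
  | .var y => if y = x then {N} else ∅
  | .lam y M => if y = x then ∅ else {A | ∃ M' ∈ lsub x N M, A = Tm.lam y M'}
  | .app M P => {A | ∃ M' ∈ lsub x N M, A = Tm.app M' P} ∪
      {A | ∃ P' ∈ lsubList x N P, A = Tm.app M P'}
def lsubList (x : ℕ) (N : Tm) : List Tm → Set (List Tm)
  | [] => ∅
  | L :: P => {Q | ∃ L' ∈ lsub x N L, Q = L' :: P} ∪
      {Q | ∃ P' ∈ lsubList x N P, Q = L :: P'}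
end

def lsubIter (x : ℕ) : Set Tm → List Tm → Set Tm
  | X, [] => X
  | X, L :: Ls => lsubIter x (⋃ A ∈ X, lsub x L A) Ls

def zeroSub (x : ℕ) (X : Set Tm) : Set Tm := {A ∈ X | x ∉ fv A}

mutual
/-- One-step reduction from a term to a (finite, idempotent) sum of terms,
represented as a set: β-reduction `(λx.M)P → M⟨P/x⟩[0/x]` closed under contexts. -/
inductive Step : Tm → Set Tm → Prop
  | beta (x : ℕ) (M : Tm) (P : List Tm) :
      Step (.app (.lam x M) P) (zeroSub x (lsubIter x {M} P))
  | lam (x : ℕ) {M : Tm} {𝕄 : Set Tm} : Step M 𝕄 →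
      Step (.lam x M) {A | ∃ M' ∈ 𝕄, A = Tm.lam x M'}
  | appL {M : Tm} {𝕄 : Set Tm} (P : List Tm) : Step M 𝕄 →
      Step (.app M P) {A | ∃ M' ∈ 𝕄, A = Tm.app M' P}
  | appR (M : Tm) {P : List Tm} {ℙ : Set (List Tm)} : StepList P ℙ →
      Step (.app M P) {A | ∃ P' ∈ ℙ, A = Tm.app M P'}
/-- One-step reduction inside a bag (in exactly one element). -/
inductive StepList : List Tm → Set (List Tm) → Prop
  | head {L : Tm} {𝕃 : Set Tm} (P : List Tm) : Step L 𝕃 →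
      StepList (L :: P) {Q | ∃ L' ∈ 𝕃, Q = L' :: P}
  | tail (L : Tm) {P : List Tm} {ℙ : Set (List Tm)} : StepList P ℙ →
      StepList (L :: P) {Q | ∃ P' ∈ ℙ, Q = L :: P'}
end

/-- One-step reduction on sums of terms: reduce one summand. -/
def SStep (X Y : Set Tm) : Prop :=
  ∃ (A : Tm) (𝔹 𝕏 : Set Tm), X = insert A 𝕏 ∧ Step A 𝔹 ∧ Y = 𝔹 ∪ 𝕏

/-- The identity term `I = λx.x`. -/
def Iterm : Tm := .lam 0 (.var 0)

/-!
Feed the term bags `[I]`. A closed term is either an identity `λx.x`, which `[I]` turns into `I`,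
or, after at most one bag `[I]`, has a redex whose contraction gives a finite sum of closed terms,
each smaller for the lexicographic order on (weight, size): a closed abstraction fed `[I]`
substitutes `I` for one occurrence of its bound variable (giving `0` if there is none), and a head
redex of an application does not raise the weight and shrinks the size. By well-founded induction,
enough bags `[I]` reduce every closed term to `0` or `I`, and further bags keep it so. A common
number of bags then works for the finitely many closed summands of `I + 𝕄`, and the sum reduces
to `I`.
-/

open Relation

theorem setOf_exists_mem_eq_image {α β : Type*} (f : α → β) (s : Set α) :
    {b | ∃ a ∈ s, b = f a} = f '' s := by
  ext; simp [eq_comm]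

theorem fv_Iterm : fv Iterm = ∅ := by
  simp [Iterm, fv]

mutual
def size : Tm → ℕ
  | .var _ => 1
  | .lam _ M => size M + 1
  | .app M P => size M + sizeList P + 1
def sizeList : List Tm → ℕ
  | [] => 0
  | L :: P => size L + sizeList P
end

-- Variable occurrences, except that identities `λy.y` weigh nothing: substituting `I` for an
-- occurrence of a variable thus strictly decreases the weight.
mutual
def weight : Tm → ℕ
  | .var _ => 1
  | .lam y (.var z) => if z = y then 0 else 1
  | .lam _ M => weight M
  | .app M P => weight M + weightList P
def weightList : List Tm → ℕ
  | [] => 0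
  | L :: P => weight L + weightList P
end

theorem weight_Iterm : weight Iterm = 0 := by
  simp [Iterm, weight]

theorem weight_lam_le (y : ℕ) (M : Tm) : weight (.lam y M) ≤ weight M := by
  cases M with
  | var z => by_cases h : z = y <;> simp [weight, h]
  | _ => simp [weight]

theorem weight_lam {y : ℕ} {M : Tm} (h : M ≠ .var y) : weight (.lam y M) = weight M := by
  cases M with
  | var z => simp_all [weight]
  | _ => simp [weight]

theorem weight_le_weight_lam_add_one (y : ℕ) (M : Tm) : weight M ≤ weight (.lam y M) + 1 := by
  cases M with
  | var z => by_cases h : z = y <;> simp [weight, h]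
  | _ => simp [weight]

mutual
theorem lsub_bounds (x : ℕ) (N : Tm) : ∀ M, ∀ B ∈ lsub x N M,
    size B + 1 = size M + size N ∧ weight B + 1 ≤ weight M + weight N ∧ fv B ⊆ fv M ∪ fv N
  | .var y, B, hB => by
    by_cases h : y = x <;> simp only [lsub, h, if_true, if_false, Set.mem_singleton_iff,
      Set.mem_empty_iff_false] at hB
    subst hB
    simp [size, weight, Nat.add_comm]
  | .lam y M, B, hB => by
    by_cases h : y = x <;> simp only [lsub, h, if_true, if_false, Set.mem_empty_iff_false] at hB
    obtain ⟨M', hM', rfl⟩ := hB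
    obtain ⟨hs, hw, hfv⟩ := lsub_bounds x N M M' hM'
    have hMy : M ≠ .var y := by
      rintro rfl
      simp [lsub, h] at hM'
    refine ⟨by simp only [size]; omega, ?_, ?_⟩
    · rw [weight_lam hMy]
      have := weight_lam_le y M'
      omega
    · simp only [fv]
      intro a ⟨ha, hay⟩
      exact (hfv ha).imp (fun h => ⟨h, hay⟩) id
  | .app M P, B, hB => by
    rcases hB with ⟨M', hM', rfl⟩ | ⟨P', hP', rfl⟩
    · obtain ⟨hs, hw, hfv⟩ := lsub_bounds x N M M' hM'
      refine ⟨by simp only [size]; omega, by simp only [weight]; omega, ?_⟩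
      simp only [fv]
      grind
    · obtain ⟨hs, hw, hfv⟩ := lsubList_bounds x N P P' hP'
      refine ⟨by simp only [size]; omega, by simp only [weight]; omega, ?_⟩
      simp only [fv]
      grind
theorem lsubList_bounds (x : ℕ) (N : Tm) : ∀ P, ∀ Q ∈ lsubList x N P,
    sizeList Q + 1 = sizeList P + size N ∧ weightList Q + 1 ≤ weightList P + weight N ∧
      fvList Q ⊆ fvList P ∪ fv N
  | [], Q, hQ => by simp [lsubList] at hQ
  | L :: P, Q, hQ => by
    rcases hQ with ⟨L', hL', rfl⟩ | ⟨P', hP', rfl⟩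
    · obtain ⟨hs, hw, hfv⟩ := lsub_bounds x N L L' hL'
      refine ⟨by simp only [sizeList]; omega, by simp only [weightList]; omega, ?_⟩
      simp only [fvList]
      grind
    · obtain ⟨hs, hw, hfv⟩ := lsubList_bounds x N P P' hP'
      refine ⟨by simp only [sizeList]; omega, by simp only [weightList]; omega, ?_⟩
      simp only [fvList]
      grind
end

theorem lsubIter_bounds (x : ℕ) : ∀ (P : List Tm) (X : Set Tm), ∀ B ∈ lsubIter x X P,
    ∃ A ∈ X, size B + P.length = size A + sizeList P ∧
      weight B + P.length ≤ weight A + weightList P ∧ fv B ⊆ fv A ∪ fvList P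
  | [], X, B, hB => ⟨B, hB, by simp [sizeList, weightList, fvList]⟩
  | L :: P, X, B, hB => by
    obtain ⟨A', hA', hs, hw, hfv⟩ := lsubIter_bounds x P _ B hB
    obtain ⟨A, hA, hA'A⟩ := Set.mem_iUnion₂.1 hA'
    obtain ⟨hs', hw', hfv'⟩ := lsub_bounds x L A A' hA'A
    refine ⟨A, hA, by simp only [List.length, sizeList]; omega,
      by simp only [List.length, weightList]; omega, ?_⟩
    simp only [fvList]
    grind

mutual
theorem lsub_finite (x : ℕ) (N : Tm) : ∀ M, (lsub x N M).Finite
  | .var y => by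
    by_cases h : y = x <;> simp [lsub, h]
  | .lam y M => by
    by_cases h : y = x <;> simp only [lsub, h, if_true, if_false, Set.finite_empty]
    rw [setOf_exists_mem_eq_image]
    exact (lsub_finite x N M).image _
  | .app M P => by
    simp only [lsub, setOf_exists_mem_eq_image]
    exact ((lsub_finite x N M).image _).union ((lsubList_finite x N P).image _)
theorem lsubList_finite (x : ℕ) (N : Tm) : ∀ P, (lsubList x N P).Finite
  | [] => by simp [lsubList]
  | L :: P => by
    simp only [lsubList, setOf_exists_mem_eq_image]
    exact ((lsub_finite x N L).image _).union ((lsubList_finite x N P).image _)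
end

theorem lsubIter_finite (x : ℕ) : ∀ (P : List Tm) {X : Set Tm}, X.Finite →
    (lsubIter x X P).Finite
  | [], _, hX => hX
  | L :: P, _, hX => lsubIter_finite x P (hX.biUnion fun A _ => lsub_finite x L A)

mutual
theorem Step.finite {A : Tm} {𝔹 : Set Tm} (h : Step A 𝔹) : 𝔹.Finite := by
  cases h with
  | beta x M P =>
    exact (lsubIter_finite x P (Set.finite_singleton M)).subset (Set.sep_subset _ _)
  | lam x h => rw [setOf_exists_mem_eq_image]; exact h.finite.image _
  | appL P h => rw [setOf_exists_mem_eq_image]; exact h.finite.image _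
  | appR M h => rw [setOf_exists_mem_eq_image]; exact h.finite.image _
theorem StepList.finite {P : List Tm} {ℙ : Set (List Tm)} (h : StepList P ℙ) : ℙ.Finite := by
  cases h with
  | head P h => rw [setOf_exists_mem_eq_image]; exact h.finite.image _
  | tail L h => rw [setOf_exists_mem_eq_image]; exact h.finite.image _
end

mutual
theorem Step.fv_subset {A : Tm} {𝔹 : Set Tm} (h : Step A 𝔹) : ∀ B ∈ 𝔹, fv B ⊆ fv A := by
  cases h with
  | beta x M P =>
    rintro B ⟨hB, hxB⟩
    obtain ⟨_, rfl, -, -, hfv⟩ := lsubIter_bounds x P {M} B hB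
    simp only [fv]
    intro a ha
    exact (hfv ha).imp (fun h => ⟨h, by rintro rfl; exact hxB ha⟩) id
  | lam x h =>
    rintro _ ⟨M', hM', rfl⟩
    exact Set.sdiff_subset_sdiff_left (h.fv_subset M' hM')
  | appL P h =>
    rintro _ ⟨M', hM', rfl⟩
    exact Set.union_subset_union_left _ (h.fv_subset M' hM')
  | appR M h =>
    rintro _ ⟨P', hP', rfl⟩
    exact Set.union_subset_union_right _ (h.fvList_subset P' hP')
theorem StepList.fvList_subset {P : List Tm} {ℙ : Set (List Tm)} (h : StepList P ℙ) :
    ∀ Q ∈ ℙ, fvList Q ⊆ fvList P := by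
  cases h with
  | head P h =>
    rintro _ ⟨L', hL', rfl⟩
    exact Set.union_subset_union_left _ (h.fv_subset L' hL')
  | tail L h =>
    rintro _ ⟨P', hP', rfl⟩
    exact Set.union_subset_union_right _ (h.fvList_subset P' hP')
end

theorem SStep.of_step {A : Tm} {𝔹 : Set Tm} (h : Step A 𝔹) : SStep {A} 𝔹 :=
  ⟨A, 𝔹, ∅, by simp, h, by simp⟩

theorem SStep.union_right {X Y : Set Tm} (h : SStep X Y) (Z : Set Tm) :
    SStep (X ∪ Z) (Y ∪ Z) := by
  obtain ⟨A, 𝔹, 𝕏, rfl, hA, rfl⟩ := h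
  exact ⟨A, 𝔹, 𝕏 ∪ Z, by rw [Set.insert_union], hA, by rw [Set.union_assoc]⟩

theorem reflTransGen_sstep_union {X Y X' Y' : Set Tm} (h : ReflTransGen SStep X Y)
    (h' : ReflTransGen SStep X' Y') : ReflTransGen SStep (X ∪ X') (Y ∪ Y') := by
  have lift (Z : Set Tm) {X Y : Set Tm} (h : ReflTransGen SStep X Y) :
      ReflTransGen SStep (X ∪ Z) (Y ∪ Z) :=
    h.lift (· ∪ Z) fun _ _ hs => hs.union_right Z
  refine (lift X' h).trans ?_
  rw [Set.union_comm Y, Set.union_comm Y]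
  exact lift Y h'

theorem reflTransGen_sstep_image_of_finite {f : Tm → Tm} {S T : Set Tm} (hS : S.Finite)
    (h : ∀ A ∈ S, ∃ R ⊆ T, ReflTransGen SStep {f A} R) :
    ∃ R ⊆ T, ReflTransGen SStep (f '' S) R := by
  induction S, hS using Set.Finite.induction_on with
  | empty => exact ⟨∅, Set.empty_subset _, by simp [ReflTransGen.refl]⟩
  | @insert A S _ _ ih =>
    obtain ⟨R, hRT, hR⟩ := h A (Set.mem_insert _ _)
    obtain ⟨R', hR'T, hR'⟩ := ih fun B hB => h B (Set.mem_insert_of_mem _ hB)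
    refine ⟨R ∪ R', Set.union_subset hRT hR'T, ?_⟩
    rw [Set.image_insert_eq, Set.insert_eq]
    exact reflTransGen_sstep_union hR hR'

theorem finite_of_reflTransGen_sstep {X Y : Set Tm} (h : ReflTransGen SStep X Y)
    (hX : X.Finite) : Y.Finite := by
  induction h with
  | refl => exact hX
  | tail _ hs ih =>
    obtain ⟨A, 𝔹, 𝕏, rfl, hA, rfl⟩ := hs
    exact hA.finite.union (ih.subset (Set.subset_insert _ _))

theorem closed_of_reflTransGen_sstep {X Y : Set Tm} (h : ReflTransGen SStep X Y)
    (hX : ∀ A ∈ X, fv A = ∅) : ∀ B ∈ Y, fv B = ∅ := by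
  induction h with
  | refl => exact hX
  | tail _ hs ih =>
    obtain ⟨A, 𝔹, 𝕏, rfl, hA, rfl⟩ := hs
    rintro B (hB | hB)
    · exact Set.subset_empty_iff.1 (ih A (Set.mem_insert _ _) ▸ hA.fv_subset B hB)
    · exact ih B (Set.mem_insert_of_mem _ hB)

theorem Step.foldl_app {A : Tm} {𝔹 : Set Tm} (Ps : List (List Tm)) (h : Step A 𝔹) :
    Step (Ps.foldl Tm.app A) ((Ps.foldl Tm.app ·) '' 𝔹) := by
  induction Ps generalizing A 𝔹 with
  | nil => simpa using h
  | cons P Ps ih =>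
    have := ih (Step.appL P h)
    rwa [setOf_exists_mem_eq_image, Set.image_image] at this

theorem SStep.image_foldl_app {X Y : Set Tm} (Ps : List (List Tm)) (h : SStep X Y) :
    SStep ((Ps.foldl Tm.app ·) '' X) ((Ps.foldl Tm.app ·) '' Y) := by
  obtain ⟨A, 𝔹, 𝕏, rfl, hA, rfl⟩ := h
  exact ⟨_, _, _, Set.image_insert_eq, hA.foldl_app Ps, Set.image_union _ _ _⟩

theorem Relation.ReflTransGen.image_foldl_app {X Y : Set Tm} (Ps : List (List Tm))
    (h : ReflTransGen SStep X Y) :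
    ReflTransGen SStep ((Ps.foldl Tm.app ·) '' X) ((Ps.foldl Tm.app ·) '' Y) :=
  h.lift _ fun _ _ hs => hs.image_foldl_app Ps

def applyI (n : ℕ) (A : Tm) : Tm := (List.replicate n [Iterm]).foldl Tm.app A

theorem applyI_add (m n : ℕ) (A : Tm) : applyI (m + n) A = applyI n (applyI m A) := by
  simp only [applyI, List.replicate_add, List.foldl_append]

theorem applyI_succ (n : ℕ) (A : Tm) : applyI (n + 1) A = applyI n (.app A [Iterm]) := rfl

theorem fv_applyI (n : ℕ) (A : Tm) : fv (applyI n A) = fv A := by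
  induction n generalizing A with
  | zero => rfl
  | succ n ih => simp [applyI_succ, ih, fv, fvList, fv_Iterm]

theorem step_app_lam_var {x : ℕ} {N : Tm} (hN : x ∉ fv N) :
    Step (.app (.lam x (.var x)) [N]) {N} := by
  convert Step.beta x (.var x) [N]
  ext B
  simp only [Set.mem_singleton_iff, zeroSub, lsubIter, Set.iUnion_iUnion_eq_left, lsub,
    ↓reduceIte, Set.mem_ofPred_eq, iff_self_and]
  grind

theorem reflTransGen_applyI_Iterm (n : ℕ) : ReflTransGen SStep {applyI n Iterm} {Iterm} := by
  induction n with
  | zero => exact .refl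
  | succ n ih =>
    have := (step_app_lam_var (x := 0) (N := Iterm) (by simp [fv_Iterm])).foldl_app
      (List.replicate n [Iterm])
    rw [Set.image_singleton] at this
    exact .head (.of_step this) ih

def CollapsesAt (n : ℕ) (A : Tm) : Prop :=
  ∃ R ⊆ ({Iterm} : Set Tm), ReflTransGen SStep {applyI n A} R

theorem CollapsesAt.mono {m n : ℕ} {A : Tm} (h : CollapsesAt m A) (hmn : m ≤ n) :
    CollapsesAt n A := by
  obtain ⟨k, rfl⟩ := Nat.exists_eq_add_of_le hmn
  obtain ⟨R, hRI, hR⟩ := h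
  obtain ⟨R', hR'I, hR'⟩ := reflTransGen_sstep_image_of_finite (f := applyI k)
    ((Set.finite_singleton _).subset hRI)
    fun B hB => ⟨{Iterm}, subset_rfl, hRI hB ▸ reflTransGen_applyI_Iterm k⟩
  refine ⟨R', hR'I, ?_⟩
  rw [applyI_add]
  have hk := hR.image_foldl_app (List.replicate k [Iterm])
  rw [Set.image_singleton] at hk
  exact hk.trans hR'

theorem exists_applyI_image_reduces_subset_Iterm {S : Set Tm} (hS : S.Finite)
    (h : ∀ A ∈ S, ∃ n, CollapsesAt n A) :
    ∃ N, ∃ R ⊆ ({Iterm} : Set Tm), ReflTransGen SStep (applyI N '' S) R := by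
  choose! n hn using h
  obtain ⟨N, hN⟩ := (hS.image n).bddAbove
  exact ⟨N, reflTransGen_sstep_image_of_finite hS fun A hA =>
    (hn A hA).mono (hN (Set.mem_image_of_mem n hA))⟩

theorem exists_collapsesAt_of_step {k : ℕ} {A : Tm} {𝔹 : Set Tm} (h : Step (applyI k A) 𝔹)
    (h𝔹 : ∀ B ∈ 𝔹, ∃ n, CollapsesAt n B) : ∃ n, CollapsesAt n A := by
  obtain ⟨N, R, hRI, hR⟩ := exists_applyI_image_reduces_subset_Iterm h.finite h𝔹
  refine ⟨k + N, R, hRI, ?_⟩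
  rw [applyI_add]
  exact .head (.of_step (h.foldl_app _)) hR

theorem weight_le_and_size_lt_of_mem_beta {x : ℕ} {M B : Tm} {P : List Tm}
    (hB : B ∈ zeroSub x (lsubIter x {M} P)) :
    weight B ≤ weight (.app (.lam x M) P) ∧ size B < size (.app (.lam x M) P) := by
  obtain ⟨hB, hxB⟩ := hB
  obtain ⟨A, hA : A = M, hs, hw, -⟩ := lsubIter_bounds x P {M} B hB
  subst A
  refine ⟨?_, by simp only [size]; omega⟩
  simp only [weight]
  cases P with
  | nil =>
    obtain rfl : B = M := hB
    have hBx : B ≠ .var x := by rintro rfl; simp [fv] at hxB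
    simp [weight_lam hBx]
  | cons L P =>
    have := weight_le_weight_lam_add_one x M
    simp only [List.length_cons] at hw
    omega

theorem exists_step_app_of_closed : ∀ (M : Tm) (P : List Tm), fv M = ∅ →
    ∃ 𝔹, Step (.app M P) 𝔹 ∧
      ∀ B ∈ 𝔹, weight B ≤ weight (.app M P) ∧ size B < size (.app M P)
  | .var y, _, hM => by simp [fv] at hM
  | .lam x M, P, _ => ⟨_, .beta x M P, fun _ hB => weight_le_and_size_lt_of_mem_beta hB⟩
  | .app M Q, P, hM => by
    obtain ⟨𝔹, hstep, hdec⟩ := exists_step_app_of_closed M Q (Set.union_empty_iff.1 hM).1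
    refine ⟨_, .appL P hstep, ?_⟩
    rintro _ ⟨B, hB, rfl⟩
    have := hdec B hB
    simp only [weight, size] at this ⊢
    omega

theorem exists_step_applyI_of_closed (A : Tm) (hA : fv A = ∅) :
    ∃ k 𝔹, Step (applyI k A) 𝔹 ∧ ∀ B ∈ 𝔹, B = Iterm ∨
      Prod.Lex (· < ·) (· < ·) (weight B, size B) (weight A, size A) := by
  cases A with
  | var y => simp [fv] at hA
  | lam x M =>
    by_cases hM : M = .var x
    · subst hM
      exact ⟨1, {Iterm}, step_app_lam_var (by simp [fv_Iterm]), fun B hB => .inl hB⟩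
    refine ⟨1, _, .beta x M [Iterm], fun B hB => .inr (.left _ _ ?_)⟩
    obtain ⟨_, rfl, -, hw, -⟩ := lsubIter_bounds x [Iterm] {M} B hB.1
    simp only [weightList, weight_Iterm, List.length_singleton] at hw
    rw [weight_lam hM]
    omega
  | app M P =>
    obtain ⟨𝔹, hstep, hdec⟩ := exists_step_app_of_closed M P (Set.union_empty_iff.1 hA).1
    refine ⟨0, 𝔹, hstep, fun B hB => .inr ?_⟩
    obtain ⟨hw, hs⟩ := hdec B hB
    rcases hw.lt_or_eq with hw | hw
    · exact .left _ _ hw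
    · exact hw ▸ .right _ hs

theorem exists_collapsesAt_of_closed (A : Tm) (hA : fv A = ∅) : ∃ n, CollapsesAt n A := by
  obtain ⟨k, 𝔹, hstep, hdec⟩ := exists_step_applyI_of_closed A hA
  refine exists_collapsesAt_of_step hstep fun B hB => ?_
  have hBclosed : fv B = ∅ := by
    simpa [fv_applyI, hA] using hstep.fv_subset B hB
  rcases hdec B hB with rfl | _
  · exact ⟨0, {Iterm}, subset_rfl, .refl⟩
  · exact exists_collapsesAt_of_closed B hBclosed
termination_by (weight A, size A)
decreasing_by assumption

/-- In the `∂₀λ`-calculus, a closed term `M` that reduces to a sum containing the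
identity, `M →* I + 𝕄`, can be made to reduce exactly to `I` by applying finitely many
closed bags: there are bags `P₁,…,Pₙ` of closed terms with `M P₁ ⋯ Pₙ →* I`. -/
theorem closed_term_reducing_to_I_plus_sum (M : Tm) (hM : fv M = ∅) (𝕄 : Set Tm)
    (h : Relation.ReflTransGen SStep {M} (insert Iterm 𝕄)) :
    ∃ Ps : List (List Tm), (∀ P ∈ Ps, ∀ L ∈ P, fv L = ∅) ∧
      Relation.ReflTransGen SStep {Ps.foldl Tm.app M} {Iterm} := by
  have hfin := finite_of_reflTransGen_sstep h (Set.finite_singleton M)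
  have hclosed := closed_of_reflTransGen_sstep h (by simpa using hM)
  obtain ⟨N, R, hRI, hR⟩ := exists_applyI_image_reduces_subset_Iterm
    (hfin.subset (Set.subset_insert _ _))
    fun A hA => exists_collapsesAt_of_closed A (hclosed A (Set.mem_insert_of_mem _ hA))
  refine ⟨List.replicate N [Iterm], by simp [fv_Iterm], ?_⟩
  have hsum : ReflTransGen SStep (applyI N '' insert Iterm 𝕄) {Iterm} := by
    rw [Set.image_insert_eq, Set.insert_eq, ← Set.union_eq_left.2 hRI]
    exact reflTransGen_sstep_union (reflTransGen_applyI_Iterm N) hR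
  simpa using (h.image_foldl_app _).trans hsum
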